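/- arXiv:1401.2373 — 4 statements merged into one kernel-verified Lean document; each statement's English description precedes it below -/
import Mathlib

section
/- Let D be a divisible abelian group and let A be a finite subgroup of D. Then D is isomorphic, as a group, to the quotient D/A. -/
/-!
Inducting on `|A|`, it suffices to treat `A = ⟨a⟩` with `a` of prime order `p`. Successive
`p`-th roots `a = p • x₁`, `x₁ = p • x₂`, … generate a copy `E` of the Prüfer `p`-group. `E` is
divisible, hence an injective `ℤ`-module and a direct summand of `D`, and multiplication by `p`
is a surjection `E → E` with kernel `⟨a⟩`. Letting it act on `E` and trivially on a complement
gives a surjective endomorphism of `D` with kernel `⟨a⟩`.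
-/

open AddSubgroup Function

theorem AddSubgroup.card_map_lt_card {G G' : Type*} [AddGroup G] [AddGroup G']
    {H : AddSubgroup G} [Finite H] (f : G →+ G') {a : G} (haH : a ∈ H) (ha : a ≠ 0)
    (hfa : f a = 0) : Nat.card (H.map f) < Nat.card H := by
  have hsurj : Surjective (f.addSubgroupMap H) := f.addSubgroupMap_surjective H
  refine lt_of_le_of_ne (Nat.le_of_dvd Nat.card_pos (H.card_map_dvd f)) fun hcard => ?_
  have hinj := ((Nat.bijective_iff_surjective_and_card _).mpr ⟨hsurj, hcard.symm⟩).injective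
  have ha' : (⟨a, haH⟩ : H) = 0 := hinj (Subtype.ext (by simpa using hfa))
  exact ha congr(($ha' : G))

theorem surjective_nsmul_of_forall_prime {M : Type*} [AddMonoid M]
    (h : ∀ p : ℕ, p.Prime → Surjective (p • · : M → M)) {n : ℕ} (hn : n ≠ 0) :
    Surjective (n • · : M → M) := by
  induction n using induction_on_primes with
  | zero => exact absurd rfl hn
  | one => simp only [one_nsmul]; exact surjective_id
  | prime_mul p n hp ih =>
    have hcomp : ((p * n) • · : M → M) = (n • ·) ∘ (p • ·) := funext fun x => mul_nsmul x p n
    rw [hcomp]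
    exact (ih (right_ne_zero_of_mul hn)).comp (h p hp)

theorem exists_surjective_addMonoidHom_ker_eq_map {D : Type*} [AddCommGroup D]
    (E : AddSubgroup D) [DivisibleBy E ℤ] (f : E →+ E) (hf : Surjective f) :
    ∃ ψ : D →+ D, Surjective ψ ∧ ψ.ker = f.ker.map E.subtype := by
  obtain ⟨r, hr⟩ := (Module.Baer.of_divisible E).extension_property_addMonoidHom E.subtype
    Subtype.coe_injective (AddMonoidHom.id E)
  have hrE (z : E) : r z = z := DFunLike.congr_fun hr z
  -- `D = E ⊕ ker r`, and `ψ` acts as `f` on `E` and as the identity on `ker r`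
  let ψ : D →+ D := AddMonoidHom.id D - E.subtype.comp r + E.subtype.comp (f.comp r)
  have hψ (d : D) : ψ d = d - r d + f (r d) := rfl
  refine ⟨ψ, fun y => ?_, ?_⟩
  · obtain ⟨z, hz⟩ := hf (r y)
    refine ⟨y - r y + z, ?_⟩
    have hrz : r (y - r y + z) = z := by simp only [map_add, map_sub, hrE]; abel
    rw [hψ, hrz, hz]
    abel
  · ext d
    simp only [AddMonoidHom.mem_ker, mem_map, AddSubgroup.coe_subtype]
    constructor
    · intro hd
      rw [hψ] at hd
      have hdE : d ∈ E := by
        rw [show d = r d - f (r d) by rw [← sub_eq_zero, ← hd]; abel]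
        exact sub_mem (r d).2 (f (r d)).2
      rw [show r d = ⟨d, hdE⟩ from hrE ⟨d, hdE⟩, sub_self, zero_add] at hd
      exact ⟨⟨d, hdE⟩, Subtype.ext hd, rfl⟩
    · rintro ⟨z, hz, rfl⟩
      rw [hψ, hrE, hz]
      simp

theorem exists_nsmul_chain {D : Type*} [AddMonoid D] {p : ℕ} (hp : Surjective (p • · : D → D))
    (a : D) : ∃ x : ℕ → D, x 0 = a ∧ ∀ k, p • x (k + 1) = x k := by
  choose g hg using hp
  exact ⟨fun k => g^[k] a, rfl, fun k => by simp only [iterate_succ_apply', hg]⟩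

section NSMulChain

variable {D : Type*} [AddCommGroup D] {p : ℕ} {x : ℕ → D}

theorem pow_nsmul_chain (hx : ∀ k, p • x (k + 1) = x k) (j k : ℕ) : p ^ j • x (k + j) = x k := by
  induction j with
  | zero => simp
  | succ j ih => rw [pow_succ', mul_nsmul, ← add_assoc, hx, ih]

theorem pow_nsmul_chain_self (hx : ∀ k, p • x (k + 1) = x k) (k : ℕ) : p ^ k • x k = x 0 := by
  simpa using pow_nsmul_chain hx k 0

theorem addOrderOf_chain [hp : Fact p.Prime] (hx : ∀ k, p • x (k + 1) = x k)
    (hx0 : addOrderOf (x 0) = p) (k : ℕ) : addOrderOf (x k) = p ^ (k + 1) := by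
  apply addOrderOf_eq_prime_pow
  · rw [pow_nsmul_chain_self hx]
    exact fun h => hp.out.ne_one (by rw [← hx0, AddMonoid.addOrderOf_eq_one_iff.mpr h])
  · rw [pow_succ, mul_nsmul, pow_nsmul_chain_self hx, ← hx0, addOrderOf_nsmul_eq_zero]

/-- For `p • x (k + 1) = x k` with `x 0` of prime order `p`, this is a copy of the Prüfer
`p`-group. -/
def chainSubgroup (x : ℕ → D) : AddSubgroup D := ⨆ k, zmultiples (x k)

theorem mem_chainSubgroup_iff (hx : ∀ k, p • x (k + 1) = x k) {y : D} :
    y ∈ chainSubgroup x ↔ ∃ k, y ∈ zmultiples (x k) := by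
  have hmono : Monotone fun k => zmultiples (x k) := by
    refine monotone_nat_of_le_succ fun k => ?_
    rw [zmultiples_le, ← hx k]
    exact nsmul_mem (mem_zmultiples _) p
  exact mem_iSup_of_directed hmono.directed_le

theorem chain_mem_chainSubgroup (k : ℕ) : x k ∈ chainSubgroup x :=
  le_iSup (fun k => zmultiples (x k)) k (mem_zmultiples (x k))

theorem surjective_nsmul_chainSubgroup [hp : Fact p.Prime] (hx : ∀ k, p • x (k + 1) = x k)
    (hx0 : addOrderOf (x 0) = p) {n : ℕ} (hn : n ≠ 0) :
    Surjective (n • · : chainSubgroup x → chainSubgroup x) := by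
  refine surjective_nsmul_of_forall_prime (fun q hq => ?_) hn
  suffices h : chainSubgroup x ≤ (chainSubgroup x).map (nsmulAddMonoidHom q) by
    rintro ⟨y, hy⟩
    obtain ⟨z, hz, hzy⟩ := h hy
    exact ⟨⟨z, hz⟩, Subtype.ext hzy⟩
  refine iSup_le fun k => zmultiples_le.mpr ?_
  by_cases hqp : q = p
  · subst hqp
    exact ⟨x (k + 1), chain_mem_chainSubgroup _, hx k⟩
  · have hcop : q.Coprime (addOrderOf (x k)) := by
      rw [addOrderOf_chain hx hx0]
      exact ((Nat.coprime_primes hq hp.out).mpr hqp).pow_right _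
    obtain ⟨m, hm⟩ := exists_nsmul_eq_self_of_coprime hcop
    exact ⟨m • x k, nsmul_mem (chain_mem_chainSubgroup _) m, by
      simpa only [nsmulAddMonoidHom_apply, nsmul_left_comm] using hm⟩

theorem mem_zmultiples_of_mem_chainSubgroup [hp : Fact p.Prime] (hx : ∀ k, p • x (k + 1) = x k)
    (hx0 : addOrderOf (x 0) = p) {y : D} (hy : y ∈ chainSubgroup x) (hpy : p • y = 0) :
    y ∈ zmultiples (x 0) := by
  obtain ⟨k, m, rfl⟩ := (mem_chainSubgroup_iff hx).mp hy
  have hdvd : (p : ℤ) ^ k * p ∣ m * p := by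
    rw [← pow_succ, ← Nat.cast_pow, ← addOrderOf_chain hx hx0 k, addOrderOf_dvd_iff_zsmul_eq_zero,
      mul_zsmul', natCast_zsmul]
    exact hpy
  obtain ⟨m', hm'⟩ := (mul_dvd_mul_iff_right (by exact_mod_cast hp.out.ne_zero)).mp hdvd
  refine ⟨m', ?_⟩
  dsimp only
  rw [hm', mul_zsmul', ← Nat.cast_pow, natCast_zsmul, pow_nsmul_chain_self hx]

end NSMulChain

theorem nonempty_addEquiv_quotient_zmultiples {D : Type*} [AddCommGroup D] {p : ℕ}
    [hp : Fact p.Prime] (hpD : Surjective (p • · : D → D)) {a : D} (ha : addOrderOf a = p) :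
    Nonempty (D ≃+ D ⧸ zmultiples a) := by
  obtain ⟨x, rfl, hx⟩ := exists_nsmul_chain hpD a
  let : DivisibleBy (chainSubgroup x) ℕ :=
    divisibleByOfSMulRightSurj _ _ (surjective_nsmul_chainSubgroup hx ha)
  let : DivisibleBy (chainSubgroup x) ℤ := AddGroup.divisibleByIntOfDivisibleByNat _
  obtain ⟨ψ, hψ, hker⟩ := exists_surjective_addMonoidHom_ker_eq_map (chainSubgroup x)
    (nsmulAddMonoidHom p) (surjective_nsmul_chainSubgroup hx ha hp.out.ne_zero)
  have hker' : ψ.ker = zmultiples (x 0) := by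
    rw [hker]
    ext y
    constructor
    · rintro ⟨z, hz, rfl⟩
      exact mem_zmultiples_of_mem_chainSubgroup hx ha z.2 congr(($hz : D))
    · rintro ⟨m, rfl⟩
      refine ⟨⟨_, zsmul_mem (chain_mem_chainSubgroup 0) m⟩, Subtype.ext ?_, rfl⟩
      change p • m • x 0 = 0
      rw [smul_comm, ← ha, addOrderOf_nsmul_eq_zero, smul_zero]
  rw [← hker']
  exact ⟨(QuotientAddGroup.quotientKerEquivOfSurjective ψ hψ).symm⟩

theorem nonempty_addEquiv_quotient_of_finite {D : Type*} [AddCommGroup D] [DivisibleBy D ℕ]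
    (A : AddSubgroup D) [Finite A] : Nonempty (D ≃+ D ⧸ A) := by
  induction hn : Nat.card A using Nat.strong_induction_on generalizing D with
  | _ n ih =>
    rcases A.bot_or_nontrivial with rfl | hA
    · exact ⟨QuotientAddGroup.quotientBot.symm⟩
    obtain ⟨p, hp, hpA⟩ := Nat.exists_prime_and_dvd (Finite.one_lt_card_iff_nontrivial.mpr hA).ne'
    have := Fact.mk hp
    obtain ⟨a, ha⟩ := exists_prime_addOrderOf_dvd_card' p hpA
    set N := zmultiples (a : D)
    have ha' : addOrderOf (a : D) = p := by rw [AddSubgroup.addOrderOf_coe, ha]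
    have ha0 : (a : D) ≠ 0 := fun h => hp.one_lt.ne' (by rw [← ha', h, addOrderOf_zero])
    obtain ⟨e⟩ :=
      nonempty_addEquiv_quotient_zmultiples (DivisibleBy.surjective_smul D ℕ hp.ne_zero) ha'
    have : Finite (A.map (QuotientAddGroup.mk' N)) :=
      Finite.of_surjective _ ((QuotientAddGroup.mk' N).addSubgroupMap_surjective A)
    have hlt : Nat.card (A.map (QuotientAddGroup.mk' N)) < n := hn ▸
      A.card_map_lt_card _ a.2 ha0 ((QuotientAddGroup.eq_zero_iff _).mpr (mem_zmultiples _))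
    obtain ⟨e'⟩ := ih _ hlt (A.map (QuotientAddGroup.mk' N)) rfl
    exact ⟨e.trans (e'.trans (QuotientAddGroup.quotientQuotientEquivQuotient N A
      (zmultiples_le.mpr a.2)))⟩

/-- If `D` is a divisible abelian group and `A` is a finite subgroup of `D`,
then `D` is isomorphic (as a group) to the quotient `D ⧸ A`. -/
theorem divisible_quotient_finite_iso
    (D : Type*) [AddCommGroup D]
    (hdiv : ∀ n : ℕ, 0 < n → Function.Surjective (fun x : D => n • x))
    (A : AddSubgroup D) (hA : Finite A) :
    Nonempty (D ≃+ D ⧸ A) :=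
  letI := divisibleByOfSMulRightSurj D ℕ fun hn => hdiv _ (Nat.pos_of_ne_zero hn)
  nonempty_addEquiv_quotient_of_finite A
end

section
/- Let G be a divisible abelian group, N a finite subgroup of G, and K a field. If the quotient G/N is isomorphic as a group to the multiplicative group Kˣ of units of K, then G itself is isomorphic as a group to Kˣ. -/
/-!
Since `N` is killed by `n = |N|` and `x ↦ xⁿ` is onto, `G ≅ G ⧸ ker(·ⁿ)`, a quotient of
`G ⧸ N ≅ Kˣ` by a subgroup `T` of exponent dividing `n`. So `T` is a finite subgroup of `Kˣ`, of
order `d` say; a field has at most `d` roots of `X ^ d - 1`, so `T` is exactly the kernel of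
`·ᵈ` on `Kˣ`. That map is onto, since `Kˣ` inherits divisibility from `G`, hence `Kˣ ⧸ T ≅ Kˣ`.
-/

open Function

theorem Function.Surjective.pow_surjective {M M' : Type*} [Monoid M] [Monoid M'] {f : M →* M'}
    (hf : Surjective f) {n : ℕ} (hn : Surjective fun x : M => x ^ n) :
    Surjective fun y : M' => y ^ n := by
  intro y
  obtain ⟨x, rfl⟩ := hf y
  obtain ⟨z, rfl⟩ := hn x
  exact ⟨f z, (map_pow f z n).symm⟩

theorem Subgroup.le_ker_powMonoidHom_natCard {G : Type*} [CommGroup G] (N : Subgroup G) :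
    N ≤ (powMonoidHom (Nat.card N)).ker := fun x hx =>
  congrArg Subtype.val (pow_card_eq_one' (x := (⟨x, hx⟩ : N)))

theorem exists_mulEquiv_quotient_of_le_ker_powMonoidHom {G H : Type*} [CommGroup G]
    [CommGroup H] (N : Subgroup G) {n : ℕ} (hn : Surjective fun x : G => x ^ n)
    (hN : N ≤ (powMonoidHom n).ker) (e : G ⧸ N ≃* H) :
    ∃ T : Subgroup H, T ≤ (powMonoidHom n).ker ∧ Nonempty (G ≃* H ⧸ T) := by
  set M := (powMonoidHom n : G →* G).ker.map (QuotientGroup.mk' N)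
  refine ⟨M.map e.toMonoidHom, ?_, ⟨?_⟩⟩
  · rintro _ ⟨_, ⟨x, hx, rfl⟩, rfl⟩
    have hx : x ^ n = 1 := hx
    change (e x) ^ n = 1
    rw [← map_pow, ← QuotientGroup.mk_pow, hx, QuotientGroup.mk_one, map_one]
  · exact (QuotientGroup.quotientKerEquivOfSurjective _ hn).symm.trans <|
      (QuotientGroup.quotientQuotientEquivQuotient N _ hN).symm.trans <|
        QuotientGroup.congr M _ e rfl

theorem Subgroup.eq_rootsOfUnity_natCard {R : Type*} [CommRing R] [IsDomain R]
    (T : Subgroup Rˣ) [Finite T] : T = rootsOfUnity (Nat.card T) R := by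
  have : NeZero (Nat.card T) := ⟨Nat.card_pos.ne'⟩
  refine Subgroup.eq_of_le_of_card_ge ?_ (card_rootsOfUnity R _)
  rw [rootsOfUnity_eq_ker]
  exact T.le_ker_powMonoidHom_natCard

theorem nonempty_units_quotient_mulEquiv {R : Type*} [CommRing R] [IsDomain R]
    (T : Subgroup Rˣ) [Finite T] (hT : Surjective fun x : Rˣ => x ^ Nat.card T) :
    Nonempty (Rˣ ⧸ T ≃* Rˣ) := by
  have hker : T = (powMonoidHom (Nat.card T)).ker := by
    rw [← rootsOfUnity_eq_ker]
    exact T.eq_rootsOfUnity_natCard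
  exact ⟨(QuotientGroup.quotientMulEquivOfEq hker).trans
    (QuotientGroup.quotientKerEquivOfSurjective _ hT)⟩

/-- If `G` is a divisible abelian group, `N` a finite subgroup, `K` a field,
and `G ⧸ N` is isomorphic as a group to `Kˣ`, then `G ≅ Kˣ`. -/
theorem divisible_quotient_units_iso
    (G : Type*) [CommGroup G]
    (hdiv : ∀ n : ℕ, 0 < n → Function.Surjective (fun x : G => x ^ n))
    (N : Subgroup G) (hN : Finite N)
    (K : Type*) [Field K]
    (e : (G ⧸ N) ≃* Kˣ) :
    Nonempty (G ≃* Kˣ) := by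
  have hn : 0 < Nat.card N := Nat.card_pos
  obtain ⟨T, hT, ⟨eT⟩⟩ := exists_mulEquiv_quotient_of_le_ker_powMonoidHom N (hdiv _ hn)
    N.le_ker_powMonoidHom_natCard e
  have : NeZero (Nat.card N) := ⟨hn.ne'⟩
  rw [← rootsOfUnity_eq_ker] at hT
  have : Finite T := Finite.of_injective _ (Subgroup.inclusion_injective hT)
  have hsurj : Surjective (e.toMonoidHom.comp (QuotientGroup.mk' N)) :=
    e.surjective.comp (QuotientGroup.mk'_surjective N)
  obtain ⟨f⟩ := nonempty_units_quotient_mulEquiv T (hsurj.pow_surjective (hdiv _ Nat.card_pos))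
  exact ⟨eT.trans f⟩
end

section
/- Let G be a group acting faithfully, transitively, and primitively on a set X, and let x, y ∈ X be distinct points. Then the intersection of the center of the stabilizer of x with the center of the stabilizer of y is trivial: any g ∈ G that centralizes the stabilizer of x and lies in it, and also centralizes the stabilizer of y and lies in it, must equal the identity. -/
/-!
Since `g` centralizes `G_x`, the orbit of `x` under the centralizer `C(g) ≥ G_x` is a block, hence
trivial by primitivity: either `C(g) = G_x`, or `C(g)` moves `x` everywhere and then `g`, which
fixes `x` and commutes with `C(g)`, fixes every point. In the first case, applied to both points,
`G_x = C(g) = G_y`; but "having the same stabilizer" is a `G`-invariant equivalence relation, which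
relates `x ≠ y` and is therefore universal, so again `g ∈ G_x` fixes every point. Faithfulness
then gives `g = 1`.
-/

/-- A transitive action is primitive if every `G`-invariant equivalence relation on `X`
is either trivial (all classes singletons) or universal (one class). -/
def IsPrimitiveAction (G X : Type*) [Group G] [MulAction G X] : Prop :=
  ∀ r : Setoid X, (∀ (g : G) (a b : X), r a b → r (g • a) (g • b)) →
    (∀ a b : X, r a b → a = b) ∨ (∀ a b : X, r a b)

open MulAction Pointwise

section

variable {G X : Type*} [Group G] [MulAction G X]

theorem MulAction.smul_eq_self_of_mem_orbit_centralizer {g : G} {x a : X} (hgx : g • x = x)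
    (ha : a ∈ orbit (Subgroup.centralizer {g}) x) : g • a = a := by
  obtain ⟨⟨c, hc⟩, rfl⟩ := ha
  change g • c • x = c • x
  rw [smul_smul, ← Subgroup.mem_centralizer_singleton_iff.mp hc, mul_smul, hgx]

namespace IsPrimitiveAction

theorem injective_or_forall_eq {Y : Type*} (hprim : IsPrimitiveAction G X) (f : X → Y)
    (hf : ∀ (t : G) (a b : X), f a = f b → f (t • a) = f (t • b)) :
    Function.Injective f ∨ ∀ a b, f a = f b :=
  hprim (Setoid.ker f) hf

theorem stabilizer_injective_or_forall_eq (hprim : IsPrimitiveAction G X) :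
    Function.Injective (stabilizer G : X → Subgroup G) ∨
      ∀ a b : X, stabilizer G a = stabilizer G b :=
  hprim.injective_or_forall_eq _ fun t a b hab => by
    rw [stabilizer_smul_eq_stabilizer_map_conj, hab, ← stabilizer_smul_eq_stabilizer_map_conj]

/-- The kernel of `a ↦ {t | a ∈ t • B}` is a `G`-invariant equivalence relation for any `B`;
when `B` is a block it relates any two points of `B`. -/
theorem isTrivialBlock {B : Set X} (hprim : IsPrimitiveAction G X) (hB : IsBlock G B) :
    IsTrivialBlock B := by
  let f : X → Set G := fun a => {t | a ∈ t • B}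
  have hf : ∀ (s : G) (a : X), f (s • a) = s • f a := fun s a => by
    ext t
    simp only [f, Set.mem_ofPred_eq, Set.mem_smul_set_iff_inv_smul_mem, smul_eq_mul, mul_inv_rev,
      inv_inv, mul_smul]
  rcases hprim.injective_or_forall_eq f (fun s a b hab => by rw [hf, hf, hab]) with hinj | hconst
  · left
    intro a ha b hb
    refine hinj (Set.ext fun t => ⟨fun hat => ?_, fun hbt => ?_⟩)
    · show b ∈ t • B
      rwa [hB.smul_eq_of_nonempty ⟨a, hat, ha⟩]
    · show a ∈ t • B
      rwa [hB.smul_eq_of_nonempty ⟨b, hbt, hb⟩]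
  · rcases B.eq_empty_or_nonempty with rfl | ⟨a, ha⟩
    · exact Or.inl Set.subsingleton_empty
    · refine Or.inr (Set.eq_univ_of_forall fun b => ?_)
      have hb : (1 : G) ∈ f b := hconst a b ▸ show a ∈ (1 : G) • B by rwa [one_smul]
      simpa only [f, Set.mem_ofPred_eq, one_smul] using hb

theorem le_stabilizer_or_orbit_eq_univ (hprim : IsPrimitiveAction G X) {H : Subgroup G} {x : X}
    (hH : stabilizer G x ≤ H) : H ≤ stabilizer G x ∨ orbit H x = Set.univ := by
  refine (hprim.isTrivialBlock (IsBlock.of_orbit hH)).imp_left fun hsub c hc => ?_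
  exact hsub (mem_orbit x (⟨c, hc⟩ : H)) (mem_orbit_self x)

theorem centralizer_le_stabilizer_or_forall_smul_eq (hprim : IsPrimitiveAction G X) {g : G}
    {x : X} (hgx : g • x = x) (hcomm : stabilizer G x ≤ Subgroup.centralizer {g}) :
    Subgroup.centralizer {g} ≤ stabilizer G x ∨ ∀ a : X, g • a = a :=
  (hprim.le_stabilizer_or_orbit_eq_univ hcomm).imp_right fun huniv a =>
    smul_eq_self_of_mem_orbit_centralizer hgx (by rw [huniv]; exact Set.mem_univ a)

end IsPrimitiveAction

end

theorem center_stabilizers_inter_trivial_of_primitive_general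
    (G X : Type*) [Group G] [MulAction G X]
    (hfaithful : ∀ g : G, (∀ x : X, g • x = x) → g = 1)
    (hprim : IsPrimitiveAction G X)
    (x y : X) (hxy : x ≠ y)
    (g : G)
    (hgx : g ∈ MulAction.stabilizer G x)
    (hgxc : ∀ h ∈ MulAction.stabilizer G x, g * h = h * g)
    (hgy : g ∈ MulAction.stabilizer G y)
    (hgyc : ∀ h ∈ MulAction.stabilizer G y, g * h = h * g) :
    g = 1 := by
  have hCx : stabilizer G x ≤ Subgroup.centralizer {g} := fun h hh =>
    Subgroup.mem_centralizer_singleton_iff.mpr (hgxc h hh).symm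
  have hCy : stabilizer G y ≤ Subgroup.centralizer {g} := fun h hh =>
    Subgroup.mem_centralizer_singleton_iff.mpr (hgyc h hh).symm
  apply hfaithful
  obtain hx | hfix := hprim.centralizer_le_stabilizer_or_forall_smul_eq hgx hCx
  · obtain hy | hfix := hprim.centralizer_le_stabilizer_or_forall_smul_eq hgy hCy
    · have hstab : stabilizer G x = stabilizer G y := le_antisymm (hCx.trans hy) (hCy.trans hx)
      obtain hinj | hconst := hprim.stabilizer_injective_or_forall_eq
      · exact absurd (hinj hstab) hxy
      · exact fun a => (hconst x a ▸ hgx : g ∈ stabilizer G a)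
    · exact hfix
  · exact hfix

/-- In a faithful, transitive, primitive action, the centers of the stabilizers of two
distinct points intersect trivially: any `g` lying in and centralizing both stabilizers
is the identity. -/
theorem center_stabilizers_inter_trivial_of_primitive
    (G X : Type*) [Group G] [MulAction G X]
    (hfaithful : ∀ g : G, (∀ x : X, g • x = x) → g = 1)
    (htrans : MulAction.IsPretransitive G X)
    (hprim : IsPrimitiveAction G X)
    (x y : X) (hxy : x ≠ y)
    (g : G)
    (hgx : g ∈ MulAction.stabilizer G x)
    (hgxc : ∀ h ∈ MulAction.stabilizer G x, g * h = h * g)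
    (hgy : g ∈ MulAction.stabilizer G y)
    (hgyc : ∀ h ∈ MulAction.stabilizer G y, g * h = h * g) :
    g = 1 :=
  center_stabilizers_inter_trivial_of_primitive_general G X hfaithful hprim x y hxy g hgx hgxc hgy
    hgyc
end

section
/- Let G be a group acting faithfully, transitively, and primitively on a set X, and suppose that every point stabilizer is abelian. Then for any two distinct points x, y ∈ X, the intersection of the stabilizer of x and the stabilizer of y is trivial; in other words, each point stabilizer G_x acts freely on X \ {x}. -/
/-!
Since `G_x` is abelian, it normalizes its subgroup `U = G_x ⊓ G_y`, and so does `G_y`.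
Primitivity makes point stabilizers maximal, so either the normalizer of `U` is all of `G`,
or it equals both `G_x` and `G_y`. In the first case `U` is a normal subgroup fixing a point,
hence fixing every point, hence trivial by faithfulness. In the second case `G_x = G_y`; an
element `g` with `g • x = y` then normalizes `G_x` without lying in it, so by maximality `G_x`
itself is normal, hence trivial.
-/

open MulAction Subgroup

section

variable {G X : Type*} [Group G] [MulAction G X]

theorem IsPrimitiveAction.isPreprimitive [IsPretransitive G X] (h : IsPrimitiveAction G X) :
    IsPreprimitive G X where
  isTrivialBlock_of_isBlock {B} hB := by
    -- the invariant relation whose classes are the translates of `B` (when `B` is nonempty)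
    let r : Setoid X := Setoid.ker fun a => {g : G | g • a ∈ B}
    have hr_iff (a b : X) : r a b ↔ ∀ g : G, g • a ∈ B ↔ g • b ∈ B :=
      Setoid.ker_def.trans Set.ext_iff
    have hr_smul (g : G) (a b : X) (hab : r a b) : r (g • a) (g • b) := by
      rw [hr_iff] at hab ⊢
      intro k
      simpa only [mul_smul] using hab (k * g)
    rcases B.eq_empty_or_nonempty with rfl | ⟨b, hb⟩
    · exact Or.inl Set.subsingleton_empty
    rcases h r hr_smul with hdiscrete | huniv
    · refine Or.inl fun a ha a' ha' => hdiscrete a a' ((hr_iff a a').2 fun g => ?_)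
      constructor <;> intro hg
      · rw [← hB.smul_eq_of_mem ha hg]; exact Set.smul_mem_smul_set ha'
      · rw [← hB.smul_eq_of_mem ha' hg]; exact Set.smul_mem_smul_set ha
    · refine Or.inr (Set.eq_univ_of_forall fun a => ?_)
      simpa only [one_smul] using ((hr_iff b a).1 (huniv b a) 1).1 (by simpa only [one_smul])

theorem eq_bot_of_normal_of_le_stabilizer [IsPretransitive G X] [FaithfulSMul G X]
    {N : Subgroup G} [N.Normal] {x : X} (hN : N ≤ stabilizer G x) : N = ⊥ := by
  rw [eq_bot_iff_forall]
  intro n hn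
  apply eq_of_smul_eq_smul (α := X)
  intro z
  obtain ⟨g, rfl⟩ := exists_smul_eq G x z
  have hx : x ∈ fixedPoints N X := fun m => hN m.2
  rw [one_smul]
  exact smul_mem_fixedPoints_of_normal g hx ⟨n, hn⟩

theorem normal_stabilizer_of_stabilizer_eq [IsPretransitive G X] {x y : X} (hxy : x ≠ y)
    (hmax : IsCoatom (stabilizer G x)) (hst : stabilizer G x = stabilizer G y) :
    (stabilizer G x).Normal := by
  obtain ⟨g, hg⟩ := exists_smul_eq G x y
  have hg_norm : g ∈ normalizer (stabilizer G x : Set G) := by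
    rw [mem_normalizer_iff_map_conj_eq]
    calc (stabilizer G x).map (MulAut.conj g) = stabilizer G (g • x) :=
          (stabilizer_smul_eq_stabilizer_map_conj g x).symm
      _ = stabilizer G x := by rw [hg, hst]
  have hg_not : g ∉ stabilizer G x := fun hg' => hxy (hg ▸ hg'.symm)
  rw [← normalizer_eq_top_iff, ← hmax.lt_iff]
  exact lt_of_le_of_ne le_normalizer fun h => hg_not (h ▸ hg_norm)

theorem le_normalizer_of_le_of_commute {H U : Subgroup G}
    (hH : ∀ g ∈ H, ∀ h ∈ H, g * h = h * g) (hU : U ≤ H) : H ≤ normalizer (U : Set G) :=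
  fun g hg => centralizer_le_normalizer _ fun u hu => hH u (hU hu) g hg

end

/-- In a faithful, transitive, primitive action with abelian point stabilizers,
the stabilizers of two distinct points intersect trivially, i.e. each point
stabilizer acts freely off its fixed point. -/
theorem stabilizers_inter_trivial_of_primitive_abelian
    (G X : Type*) [Group G] [MulAction G X]
    (hfaithful : ∀ g : G, (∀ x : X, g • x = x) → g = 1)
    (htrans : MulAction.IsPretransitive G X)
    (hprim : IsPrimitiveAction G X)
    (hab : ∀ z : X, ∀ g ∈ MulAction.stabilizer G z, ∀ h ∈ MulAction.stabilizer G z,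
      g * h = h * g)
    (x y : X) (hxy : x ≠ y) :
    MulAction.stabilizer G x ⊓ MulAction.stabilizer G y = ⊥ := by
  have : FaithfulSMul G X := faithfulSMul_iff.2 hfaithful
  have : Nontrivial X := ⟨⟨x, y, hxy⟩⟩
  have : IsPreprimitive G X := hprim.isPreprimitive
  have hmax (z : X) := IsPreprimitive.isCoatom_stabilizer_of_isPreprimitive G z
  set U := stabilizer G x ⊓ stabilizer G y
  have hx := (hmax x).le_iff.1 (le_normalizer_of_le_of_commute (hab x) (inf_le_left : U ≤ _))
  have hy := (hmax y).le_iff.1 (le_normalizer_of_le_of_commute (hab y) (inf_le_right : U ≤ _))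
  rcases hx with hU_top | hU_eq
  · have : U.Normal := normalizer_eq_top_iff.1 hU_top
    exact eq_bot_of_normal_of_le_stabilizer inf_le_left
  · rw [hU_eq] at hy
    have hst : stabilizer G x = stabilizer G y := hy.resolve_left (hmax x).ne_top
    have := normal_stabilizer_of_stabilizer_eq hxy (hmax x) hst
    exact le_bot_iff.1 (inf_le_left.trans (eq_bot_of_normal_of_le_stabilizer le_rfl).le)
end
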